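/- arXiv:1611.08560 — 2 statements merged into one kernel-verified Lean document; each statement's English description precedes it below -/
import Mathlib

section
/- As r → 0⁺, ∫₀^{2r} S(u/2, r) · 2πu·e^{−πu²} du ∼ (1/2)·π²·r⁴, i.e., the ratio of the integral to (1/2)π²r⁴ tends to 1. -/
open MeasureTheory Real Filter

/-- The disk-segment area `S(v,r) = r²·arccos(v/r) − v·√(r² − v²)`. -/
noncomputable def S (v r : ℝ) : ℝ := r ^ 2 * Real.arccos (v / r) - v * Real.sqrt (r ^ 2 - v ^ 2)

/-!
`S (u/2) r` scales as `r² · S (u/(2r)) 1`, so substituting `u = 2rt` turns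
`J(r) = ∫₀^{2r} S(u/2, r) · 2πu du` into `8πr⁴ ∫₀¹ t · S(t, 1) dt`, and the last integral equals
`π/16` by an explicit antiderivative; hence `J(r) = π²r⁴/2` exactly. On `[0, 2r]` the weight
`e^{−πu²}` lies between `e^{−4πr²}` and `1` while `S(u/2, r) ≥ 0`, so the integral in question lies
between `e^{−4πr²} J(r)` and `J(r)`, and the ratio is squeezed to `1`.
-/

lemma S_eq_sq_mul_S_div {v r : ℝ} (hr : 0 < r) : S v r = r ^ 2 * S (v / r) 1 := by
  have hsqrt : √(r ^ 2 - v ^ 2) = r * √(1 - (v / r) ^ 2) := by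
    rw [← Real.sqrt_sq hr.le, ← Real.sqrt_mul (sq_nonneg r), Real.sqrt_sq hr.le]
    congr 1
    field_simp
  simp only [S, hsqrt, div_one, one_pow]
  field_simp

lemma S_one_nonneg (t : ℝ) : 0 ≤ S t 1 := by
  have hsin : √(1 - t ^ 2) ≤ arccos t := by
    rw [← sin_arccos]
    exact sin_le (arccos_nonneg t)
  have hmul : t * √(1 - t ^ 2) ≤ √(1 - t ^ 2) := by
    rcases le_or_gt t 1 with ht | ht
    · exact mul_le_of_le_one_left (Real.sqrt_nonneg _) ht
    · rw [Real.sqrt_eq_zero'.2 (by nlinarith), mul_zero]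
  simp only [S, div_one, one_pow]
  linarith

lemma S_nonneg (v : ℝ) {r : ℝ} (hr : 0 < r) : 0 ≤ S v r := by
  rw [S_eq_sq_mul_S_div hr]
  exact mul_nonneg (sq_nonneg r) (S_one_nonneg _)

noncomputable def momentPrimitive (t : ℝ) : ℝ :=
  t ^ 2 / 2 * arccos t + arcsin t / 8 - (t + 2 * t ^ 3) * √(1 - t ^ 2) / 8

lemma continuous_momentPrimitive : Continuous momentPrimitive := by
  unfold momentPrimitive
  fun_prop

lemma hasDerivAt_momentPrimitive {t : ℝ} (h₀ : -1 < t) (h₁ : t < 1) :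
    HasDerivAt momentPrimitive (t * S t 1) t := by
  have hpos : 0 < 1 - t ^ 2 := by nlinarith
  set s := √(1 - t ^ 2) with hs
  have hs0 : s ≠ 0 := (Real.sqrt_pos.2 hpos).ne'
  have hs2 : s ^ 2 = 1 - t ^ 2 := Real.sq_sqrt hpos.le
  have dsqrt : HasDerivAt (fun y : ℝ => √(1 - y ^ 2)) (-(2 * t) / (2 * s)) t :=
    ((hasDerivAt_pow 2 t).const_sub 1).sqrt hpos.ne' |>.congr_deriv (by simp [hs])
  have dG := ((((hasDerivAt_pow 2 t).div_const 2).mul (hasDerivAt_arccos h₀.ne' h₁.ne)).add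
    ((hasDerivAt_arcsin h₀.ne' h₁.ne).div_const 8)).sub
    ((((hasDerivAt_id t).add ((hasDerivAt_pow 3 t).const_mul 2)).mul dsqrt).div_const 8)
  refine dG.congr_deriv ?_
  simp only [S, div_one, one_pow, ← hs, Pi.add_apply, id_eq]
  field_simp
  linear_combination (4 * t ^ 2 - 2) * hs2

lemma continuous_S_one : Continuous fun t : ℝ => S t 1 := by
  unfold S
  fun_prop

lemma integral_mul_S_one : ∫ t in (0 : ℝ)..1, t * S t 1 = π / 16 := by
  rw [intervalIntegral.integral_eq_sub_of_hasDerivAt_of_le zero_le_one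
    continuous_momentPrimitive.continuousOn
    (fun t ht => hasDerivAt_momentPrimitive (by linarith [ht.1]) ht.2)
    ((continuous_id.mul continuous_S_one).intervalIntegrable 0 1)]
  simp [momentPrimitive]
  ring

lemma integral_S_half_mul {r : ℝ} (hr : 0 < r) :
    ∫ u in (0 : ℝ)..(2 * r), S (u / 2) r * (2 * π * u) = 1 / 2 * π ^ 2 * r ^ 4 := by
  have hr2 : 2 * r ≠ 0 := by positivity
  have hscale (u : ℝ) :
      S (u / 2) r * (2 * π * u) = 4 * π * r ^ 3 * (u / (2 * r) * S (u / (2 * r)) 1) := by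
    rw [S_eq_sq_mul_S_div hr, div_div, mul_comm 2 r]
    field_simp
    ring
  simp_rw [hscale]
  rw [intervalIntegral.integral_comp_div (fun t => 4 * π * r ^ 3 * (t * S t 1)) hr2, zero_div,
    div_self hr2, intervalIntegral.integral_const_mul, integral_mul_S_one, smul_eq_mul]
  ring

lemma integral_mul_mem_Icc_of_mem_Icc {f g : ℝ → ℝ} {a b c : ℝ} (hab : a ≤ b)
    (hf : IntervalIntegrable f volume a b)
    (hfg : IntervalIntegrable (fun x => f x * g x) volume a b)
    (hf0 : ∀ x ∈ Set.Icc a b, 0 ≤ f x) (hg : ∀ x ∈ Set.Icc a b, g x ∈ Set.Icc c 1) :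
    ∫ x in a..b, f x * g x ∈ Set.Icc (c * ∫ x in a..b, f x) (∫ x in a..b, f x) := by
  constructor
  · rw [← intervalIntegral.integral_const_mul]
    refine intervalIntegral.integral_mono_on hab (hf.const_mul c) hfg fun x hx => ?_
    rw [mul_comm c]
    exact mul_le_mul_of_nonneg_left (hg x hx).1 (hf0 x hx)
  · refine intervalIntegral.integral_mono_on hab hfg hf fun x hx => ?_
    exact mul_le_of_le_one_right (hf0 x hx) (hg x hx).2

lemma exp_neg_pi_sq_mem_Icc {u r : ℝ} (hu : u ∈ Set.Icc 0 (2 * r)) :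
    exp (-π * u ^ 2) ∈ Set.Icc (exp (-π * (2 * r) ^ 2)) 1 := by
  have hsq : u ^ 2 ≤ (2 * r) ^ 2 := pow_le_pow_left₀ hu.1 hu.2 2
  refine ⟨exp_le_exp.2 ?_, exp_le_one_iff.2 ?_⟩ <;> nlinarith [pi_pos, sq_nonneg u]

lemma integral_S_half_mul_exp_div_mem_Icc {r : ℝ} (hr : 0 < r) :
    (∫ u in (0 : ℝ)..(2 * r), S (u / 2) r * (2 * π * u * exp (-π * u ^ 2))) /
      (1 / 2 * π ^ 2 * r ^ 4) ∈ Set.Icc (exp (-π * (2 * r) ^ 2)) 1 := by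
  have hcont : Continuous fun u => S (u / 2) r * (2 * π * u) := by unfold S; fun_prop
  have hmem : ∫ u in (0 : ℝ)..(2 * r), S (u / 2) r * (2 * π * u * exp (-π * u ^ 2)) ∈
      Set.Icc (exp (-π * (2 * r) ^ 2) * (1 / 2 * π ^ 2 * r ^ 4)) (1 / 2 * π ^ 2 * r ^ 4) := by
    rw [← integral_S_half_mul hr]
    simpa only [mul_assoc] using integral_mul_mem_Icc_of_mem_Icc
      (g := fun u => exp (-π * u ^ 2)) (by positivity)
      (hcont.intervalIntegrable _ _) ((hcont.mul (by fun_prop)).intervalIntegrable _ _)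
      (fun u hu => mul_nonneg (S_nonneg _ hr) (by have := hu.1; positivity))
      (fun u hu => exp_neg_pi_sq_mem_Icc hu)
  have hJ : 0 < 1 / 2 * π ^ 2 * r ^ 4 := by positivity
  exact ⟨(le_div_iff₀ hJ).2 hmem.1, (div_le_one hJ).2 hmem.2⟩

/-- As `r → 0⁺`, `∫₀^{2r} S(u/2, r)·2πu·e^(−πu²) du ∼ (1/2)·π²·r⁴`, i.e., the ratio of
the integral to `(1/2)π²r⁴` tends to `1`. -/
theorem stmt_6 :
    Tendsto
      (fun r : ℝ =>
        (∫ u in (0 : ℝ)..(2 * r), S (u / 2) r * (2 * π * u * Real.exp (-π * u ^ 2))) /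
          ((1 / 2) * π ^ 2 * r ^ 4))
      (nhdsWithin 0 (Set.Ioi 0)) (nhds 1) := by
  have hlower :
      Tendsto (fun r : ℝ => exp (-π * (2 * r) ^ 2)) (nhdsWithin 0 (Set.Ioi 0)) (nhds 1) := by
    have hcont : Continuous fun r : ℝ => exp (-π * (2 * r) ^ 2) := by fun_prop
    simpa using (hcont.tendsto 0).mono_left nhdsWithin_le_nhds
  have hbounds : ∀ᶠ r in nhdsWithin 0 (Set.Ioi 0),
      (∫ u in (0 : ℝ)..(2 * r), S (u / 2) r * (2 * π * u * exp (-π * u ^ 2))) /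
        ((1 / 2) * π ^ 2 * r ^ 4) ∈ Set.Icc (exp (-π * (2 * r) ^ 2)) 1 :=
    eventually_mem_nhdsWithin.mono fun _ hr => integral_S_half_mul_exp_div_mem_Icc hr
  exact tendsto_of_tendsto_of_tendsto_of_le_of_le' hlower tendsto_const_nhds
    (hbounds.mono fun _ h => h.1) (hbounds.mono fun _ h => h.2)
end

section
/- For every a > 0 and every α with 2 < α < 4, 2π·∫₀^∞ (1 − e^{−aπr²})·r^{1−α} dr = π^{α/2}·a^{α/2−1}·|Γ(1 − α/2)|. -/
/-!
Substituting `u = aπr²` turns the integral into `(aπ)^(α/2-1)/2 · ∫₀^∞ (1 - e^(-u)) u^(-α/2) du`.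
With `β = α/2 ∈ (1, 2)`, integrating by parts against `u^(1-β)/(1-β)` kills both boundary terms
and leaves `-Γ(2-β)/(1-β) = -Γ(1-β)`, which is positive because `Γ < 0` on `(-1, 0)`.
-/

open MeasureTheory Real

open Set Filter Topology

lemma one_sub_exp_neg_nonneg {x : ℝ} (hx : 0 ≤ x) : 0 ≤ 1 - exp (-x) := by
  simpa using exp_le_one_iff.mpr (neg_nonpos.mpr hx)

lemma one_sub_exp_neg_le_self (x : ℝ) : 1 - exp (-x) ≤ x := by
  linarith [add_one_le_exp (-x)]

lemma one_sub_exp_neg_le_one (x : ℝ) : 1 - exp (-x) ≤ 1 := by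
  linarith [exp_pos (-x)]

lemma one_sub_exp_neg_mul_rpow_le_rpow_add_one {x : ℝ} (hx : 0 < x) (p : ℝ) :
    (1 - exp (-x)) * x ^ p ≤ x ^ (p + 1) := by
  rw [rpow_add_one hx.ne', mul_comm (x ^ p)]
  exact mul_le_mul_of_nonneg_right (one_sub_exp_neg_le_self x) (by positivity)

lemma one_sub_exp_neg_mul_rpow_le_rpow {x : ℝ} (hx : 0 < x) (p : ℝ) :
    (1 - exp (-x)) * x ^ p ≤ x ^ p :=
  mul_le_of_le_one_left (by positivity) (one_sub_exp_neg_le_one x)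

lemma Real.Gamma_neg_of_neg_one_lt_of_neg {s : ℝ} (h1 : -1 < s) (h0 : s < 0) : Gamma s < 0 := by
  have hpos : 0 < s * Gamma s := by
    rw [← Gamma_add_one h0.ne]
    exact Gamma_pos_of_pos (by linarith)
  exact neg_of_mul_pos_right hpos h0.le

lemma tendsto_one_sub_exp_neg_mul_rpow_nhdsGT_zero {p : ℝ} (hp : -1 < p) :
    Tendsto (fun x ↦ (1 - exp (-x)) * x ^ p) (𝓝[>] 0) (𝓝 0) := by
  have hpow : Tendsto (fun x : ℝ ↦ x ^ (p + 1)) (𝓝[>] 0) (𝓝 0) := by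
    simpa [zero_rpow (by linarith : p + 1 ≠ 0)] using
      (continuousAt_rpow_const 0 (p + 1) (Or.inr (by linarith))).tendsto.mono_left
        nhdsWithin_le_nhds
  refine squeeze_zero' ?_ ?_ hpow <;> filter_upwards [self_mem_nhdsWithin] with x (hx : 0 < x)
  · exact mul_nonneg (one_sub_exp_neg_nonneg hx.le) (by positivity)
  · exact one_sub_exp_neg_mul_rpow_le_rpow_add_one hx p

lemma tendsto_one_sub_exp_neg_mul_rpow_atTop {p : ℝ} (hp : p < 0) :
    Tendsto (fun x ↦ (1 - exp (-x)) * x ^ p) atTop (𝓝 0) := by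
  have hpow : Tendsto (fun x : ℝ ↦ x ^ p) atTop (𝓝 0) := by
    simpa using tendsto_rpow_neg_atTop (neg_pos.mpr hp)
  refine squeeze_zero' ?_ ?_ hpow <;> filter_upwards [eventually_gt_atTop 0] with x hx
  · exact mul_nonneg (one_sub_exp_neg_nonneg hx.le) (by positivity)
  · exact one_sub_exp_neg_mul_rpow_le_rpow hx p

lemma integrableOn_one_sub_exp_neg_mul_rpow {β : ℝ} (h1 : 1 < β) (h2 : β < 2) :
    IntegrableOn (fun x : ℝ ↦ (1 - exp (-x)) * x ^ (-β)) (Ioi 0) := by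
  have hmeas : AEStronglyMeasurable (fun x : ℝ ↦ (1 - exp (-x)) * x ^ (-β))
      (volume.restrict (Ioi 0)) :=
    ContinuousOn.aestronglyMeasurable ((continuousOn_const.sub (by fun_prop)).mul
      (continuousOn_id.rpow_const fun x hx ↦ Or.inl (ne_of_gt hx))) measurableSet_Ioi
  have hnorm : ∀ x : ℝ, 0 < x → ‖(1 - exp (-x)) * x ^ (-β)‖ = (1 - exp (-x)) * x ^ (-β) :=
    fun x hx ↦ norm_of_nonneg (mul_nonneg (one_sub_exp_neg_nonneg hx.le) (by positivity))
  rw [← Ioc_union_Ioi_eq_Ioi zero_le_one, integrableOn_union]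
  constructor
  · refine Integrable.mono' (intervalIntegral.intervalIntegrable_rpow' (r := -β + 1)
      (by linarith)).1 (hmeas.mono_set Ioc_subset_Ioi_self) ?_
    filter_upwards [ae_restrict_mem measurableSet_Ioc] with x hx
    rw [hnorm x hx.1]
    exact one_sub_exp_neg_mul_rpow_le_rpow_add_one hx.1 (-β)
  · refine Integrable.mono' (integrableOn_Ioi_rpow_of_lt (a := -β) (by linarith) zero_lt_one)
      (hmeas.mono_set (Ioi_subset_Ioi zero_le_one)) ?_
    filter_upwards [ae_restrict_mem measurableSet_Ioi] with x (hx : 1 < x)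
    rw [hnorm x (zero_lt_one.trans hx)]
    exact one_sub_exp_neg_mul_rpow_le_rpow (zero_lt_one.trans hx) (-β)

lemma integral_one_sub_exp_neg_mul_rpow {β : ℝ} (h1 : 1 < β) (h2 : β < 2) :
    ∫ x in Ioi (0 : ℝ), (1 - exp (-x)) * x ^ (-β) = -Gamma (1 - β) := by
  have hβ : 1 - β ≠ 0 := by linarith
  have hu : ∀ x ∈ Ioi (0 : ℝ), HasDerivAt (fun x ↦ 1 - exp (-x)) (exp (-x)) x := fun x _ ↦ by
    simpa using ((hasDerivAt_neg x).exp).const_sub 1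
  have hv : ∀ x ∈ Ioi (0 : ℝ), HasDerivAt (fun x ↦ x ^ (1 - β) / (1 - β)) (x ^ (-β)) x :=
    fun x hx ↦ by
      refine ((hasDerivAt_rpow_const (Or.inl (ne_of_gt hx))).div_const (1 - β)).congr_deriv ?_
      rw [mul_div_cancel_left₀ _ hβ, sub_sub_cancel_left]
  have hu'v : IntegrableOn (fun x ↦ exp (-x) * (x ^ (1 - β) / (1 - β))) (Ioi 0) := by
    refine IntegrableOn.congr_fun ((GammaIntegral_convergent (s := 2 - β) (by linarith)).div_const
      (1 - β)) (fun x _ ↦ ?_) measurableSet_Ioi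
    ring_nf
  have hboundary : ∀ l : Filter ℝ, Tendsto (fun x ↦ (1 - exp (-x)) * x ^ (1 - β)) l (𝓝 0) →
      Tendsto (fun x ↦ (1 - exp (-x)) * (x ^ (1 - β) / (1 - β))) l (𝓝 0) := fun l h ↦ by
    simpa [mul_div_assoc] using h.div_const (1 - β)
  rw [integral_Ioi_mul_deriv_eq_deriv_mul hu hv (integrableOn_one_sub_exp_neg_mul_rpow h1 h2) hu'v
    (hboundary _ (tendsto_one_sub_exp_neg_mul_rpow_nhdsGT_zero (by linarith)))
    (hboundary _ (tendsto_one_sub_exp_neg_mul_rpow_atTop (by linarith)))]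
  have hΓ : ∫ x in Ioi (0 : ℝ), exp (-x) * x ^ (1 - β) = (1 - β) * Gamma (1 - β) := by
    rw [← Gamma_add_one hβ, Gamma_eq_integral (by linarith), add_sub_cancel_right]
  simp_rw [← mul_div_assoc]
  rw [integral_div, hΓ, mul_div_cancel_left₀ _ hβ]
  ring

lemma integral_Ioi_comp_mul_left_mul_rpow (f : ℝ → ℝ) {c : ℝ} (hc : 0 < c) (β : ℝ) :
    ∫ x in Ioi (0 : ℝ), f (c * x) * x ^ (-β) =
      c ^ (β - 1) * ∫ u in Ioi (0 : ℝ), f u * u ^ (-β) := by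
  have hsub := integral_comp_mul_left_Ioi (fun u ↦ f u * u ^ (-β)) 0 hc
  rw [mul_zero, smul_eq_mul] at hsub
  have hpow : ∀ x ∈ Ioi (0 : ℝ), f (c * x) * x ^ (-β) = c ^ β * (f (c * x) * (c * x) ^ (-β)) :=
    fun x (hx : 0 < x) ↦ by
      rw [mul_rpow hc.le hx.le, rpow_neg hc.le]
      field_simp
  rw [setIntegral_congr_fun measurableSet_Ioi hpow, integral_const_mul, hsub, ← mul_assoc,
    rpow_sub_one hc.ne', div_eq_mul_inv]

lemma integral_Ioi_comp_sq_mul_rpow (g : ℝ → ℝ) (α : ℝ) :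
    ∫ r in Ioi (0 : ℝ), g (r ^ 2) * r ^ (1 - α) =
      2⁻¹ * ∫ u in Ioi (0 : ℝ), g u * u ^ (-(α / 2)) := by
  conv_rhs => rw [← integral_comp_rpow_Ioi_of_pos two_pos, ← integral_const_mul]
  refine setIntegral_congr_fun measurableSet_Ioi fun r (hr : 0 < r) ↦ ?_
  rw [rpow_two, ← rpow_natCast, ← rpow_mul hr.le, sub_eq_add_neg 1 α, rpow_add hr, smul_eq_mul]
  norm_num
  ring_nf

/-- For `a > 0` and `2 < α < 4`,
`2π·∫₀^∞ (1 − e^(−aπr²))·r^(1−α) dr = π^(α/2)·a^(α/2−1)·|Γ(1 − α/2)|`. -/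
theorem stmt_10 (a α : ℝ) (ha : 0 < a) (hα1 : 2 < α) (hα2 : α < 4) :
    2 * π * (∫ r in Set.Ioi (0 : ℝ), (1 - Real.exp (-a * π * r ^ 2)) * r ^ (1 - α))
      = π ^ (α / 2) * a ^ (α / 2 - 1) * |Real.Gamma (1 - α / 2)| := by
  have hsq := integral_Ioi_comp_sq_mul_rpow (fun u ↦ 1 - exp (-(a * π * u))) α
  have hscale :=
    integral_Ioi_comp_mul_left_mul_rpow (fun u ↦ 1 - exp (-u)) (mul_pos ha pi_pos) (α / 2)
  simp only [neg_mul]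
  rw [hsq, hscale, integral_one_sub_exp_neg_mul_rpow (by linarith) (by linarith),
    abs_of_neg (Gamma_neg_of_neg_one_lt_of_neg (by linarith) (by linarith)),
    mul_rpow ha.le pi_pos.le, rpow_sub_one pi_ne_zero]
  field_simp
end
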